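/- arXiv:2311.07566 — 4 statements merged into one kernel-verified Lean document; each statement's English description precedes it below -/
import Mathlib

section
/- The shuffle product on symmetric polynomials, defined by (R * R')(z_1,…,z_{n+n'}) = (1/(n! n'!)) · Sym[ R(z_1,…,z_n) R'(z_{n+1},…,z_{n+n'}) ∏_{a=1}^{n} ∏_{b=n+1}^{n+n'} ζ(z_a - z_b) ], is associative: (R * R') * R'' = R * (R' * R'') for all symmetric Laurent-free polynomials R, R', R'' (with values in the field F of rational functions in ħ, u_1,…,u_g), whenever ζ(x) = ((x-ħ)/x)·∏_{e=1}^{g}(x+u_e)(x+ħ-u_e). -/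
open MvPolynomial
set_option synthInstance.maxHeartbeats 1000000
set_option maxHeartbeats 1000000

noncomputable section

/-- The field `F = ℚ(ħ, u_1, …, u_g)`. -/
abbrev F (g : ℕ) : Type := FractionRing (MvPolynomial (Fin (g+1)) ℚ)

def hbar (g : ℕ) : F g := algebraMap (MvPolynomial (Fin (g+1)) ℚ) (F g) (X 0)
def uu (g : ℕ) (e : Fin g) : F g := algebraMap (MvPolynomial (Fin (g+1)) ℚ) (F g) (X e.succ)

/-- The field of rational functions in `z_1, …, z_n` over `F`. -/
abbrev Kn (g n : ℕ) : Type := FractionRing (MvPolynomial (Fin n) (F g))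

def ι (g n : ℕ) : MvPolynomial (Fin n) (F g) →+* Kn g n := algebraMap _ _
def zz (g n : ℕ) (a : Fin n) : Kn g n := ι g n (X a)
def cc (g n : ℕ) (r : F g) : Kn g n := ι g n (C r)

/-- ζ(x) = ((x-ħ)/x) ∏_e (x+u_e)(x+ħ-u_e). -/
def zeta (g n : ℕ) (x : Kn g n) : Kn g n :=
  ((x - cc g n (hbar g)) / x) *
    ∏ e : Fin g, (x + cc g n (uu g e)) * (x + cc g n (hbar g) - cc g n (uu g e))

/-- The field automorphism of `Kn g n` permuting the variables `z_a`. -/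
def permK (g n : ℕ) (σ : Equiv.Perm (Fin n)) : Kn g n ≃+* Kn g n :=
  IsFractionRing.ringEquivOfRingEquiv (renameEquiv (F g) σ).toRingEquiv

/-- `R` is a symmetric polynomial. -/
def SymPoly (g n : ℕ) (R : MvPolynomial (Fin n) (F g)) : Prop :=
  ∀ σ : Equiv.Perm (Fin n), rename σ R = R

/-- The shuffle product of `R` (in `n` variables) and `R'` (in `n'` variables). -/
def shuffle (g n n' : ℕ) (R : MvPolynomial (Fin n) (F g))
    (R' : MvPolynomial (Fin n') (F g)) : Kn g (n+n') :=
  (((n.factorial * n'.factorial : ℕ) : Kn g (n+n')))⁻¹ *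
  ∑ σ : Equiv.Perm (Fin (n+n')), permK g (n+n') σ
    ( ι g (n+n') (rename (Fin.castAdd n') R * rename (Fin.natAdd n) R') *
      ∏ a : Fin n, ∏ b : Fin n',
        zeta g (n+n') (zz g (n+n') (Fin.castAdd n' a) - zz g (n+n') (Fin.natAdd n b)) )

/-- The field isomorphism `Kn g m ≃+* Kn g m'` induced by an equality `m = m'`
(relabelling the variables along `finCongr h`). -/
def castK (g : ℕ) {m m' : ℕ} (h : m = m') : Kn g m ≃+* Kn g m' :=
  IsFractionRing.ringEquivOfRingEquiv (renameEquiv (F g) (finCongr h)).toRingEquiv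

-- ##################### aux #####################
namespace ShufAux

/-- Embedding of rational function fields along an injection of variables. -/
def embK (g : ℕ) {m m' : ℕ} (f : Fin m → Fin m') (hf : Function.Injective f) :
    Kn g m →+* Kn g m' :=
  IsFractionRing.lift
    (g := (ι g m').comp (rename f : MvPolynomial (Fin m) (F g) →ₐ[F g] _).toRingHom)
    (by rw [RingHom.coe_comp]
        exact (IsFractionRing.injective _ _).comp (rename_injective f hf))

variable {g m m' m'' : ℕ}

lemma embK_ι (f : Fin m → Fin m') (hf : Function.Injective f) (p : MvPolynomial (Fin m) (F g)) :
    embK g f hf (ι g m p) = ι g m' (rename f p) :=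
  IsFractionRing.lift_algebraMap _ _

lemma hom_ext {A : Type*} [CommRing A] {φ ψ : Kn g m →+* A}
    (h : ∀ p, φ (ι g m p) = ψ (ι g m p)) : φ = ψ :=
  IsLocalization.ringHom_ext (nonZeroDivisors _) (RingHom.ext h)

lemma permK_apply (σ : Equiv.Perm (Fin m)) (x : Kn g m) :
    permK g m σ x = embK g ⇑σ σ.injective x := by
  have h : ((permK g m σ : Kn g m ≃+* Kn g m) : Kn g m →+* Kn g m) = embK g ⇑σ σ.injective :=
    hom_ext (fun p => by
      rw [embK_ι]
      exact IsFractionRing.ringEquivOfRingEquiv_algebraMap _ p)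
  exact RingHom.congr_fun h x

lemma castK_apply (h : m = m') (x : Kn g m) :
    castK g h x = embK g ⇑(finCongr h) (finCongr h).injective x := by
  have h2 : ((castK g h : Kn g m ≃+* Kn g m') : Kn g m →+* Kn g m') =
      embK g ⇑(finCongr h) (finCongr h).injective :=
    hom_ext (fun p => by
      rw [embK_ι]
      exact IsFractionRing.ringEquivOfRingEquiv_algebraMap _ p)
  exact RingHom.congr_fun h2 x

lemma embK_comp (f : Fin m → Fin m') (hf : Function.Injective f)
    (f' : Fin m' → Fin m'') (hf' : Function.Injective f') (x : Kn g m) :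
    embK g f' hf' (embK g f hf x) = embK g (f' ∘ f) (hf'.comp hf) x := by
  have h : (embK g f' hf').comp (embK g f hf) = embK g (f' ∘ f) (hf'.comp hf) :=
    hom_ext (fun p => by
      simp only [RingHom.comp_apply, embK_ι, rename_rename])
  exact RingHom.congr_fun h x

lemma embK_congr {f f' : Fin m → Fin m'} (hf : Function.Injective f)
    (hf' : Function.Injective f') (h : ∀ a, f a = f' a) (x : Kn g m) :
    embK g f hf x = embK g f' hf' x := by
  obtain rfl : f = f' := funext h
  rfl

lemma embK_zz (f : Fin m → Fin m') (hf : Function.Injective f) (a : Fin m) :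
    embK g f hf (zz g m a) = zz g m' (f a) := by
  rw [zz, embK_ι, rename_X, zz]

lemma embK_cc (f : Fin m → Fin m') (hf : Function.Injective f) (r : F g) :
    embK g f hf (cc g m r) = cc g m' r := by
  rw [cc, embK_ι, rename_C, cc]

lemma embK_zeta (f : Fin m → Fin m') (hf : Function.Injective f) (x : Kn g m) :
    embK g f hf (zeta g m x) = zeta g m' (embK g f hf x) := by
  simp only [zeta, map_mul, map_div₀, map_sub, map_add, map_prod, embK_cc]

end ShufAux

namespace ShufAux

variable {g : ℕ}

lemma natAdd_inj {n m : ℕ} : Function.Injective (Fin.natAdd n : Fin m → Fin (n+m)) := by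
  intro a b h
  have := congrArg Fin.val h
  simp only [Fin.natAdd] at this
  exact Fin.ext (by omega)

/-- The product of zeta factors between two groups of variables. -/
def Zf (g N : ℕ) {m k : ℕ} (f : Fin m → Fin N) (f' : Fin k → Fin N) : Kn g N :=
  ∏ a : Fin m, ∏ b : Fin k, zeta g N (zz g N (f a) - zz g N (f' b))

lemma embK_Zf {N N' m k : ℕ} (e : Fin N → Fin N') (he : Function.Injective e)
    (f : Fin m → Fin N) (f' : Fin k → Fin N) :
    embK g e he (Zf g N f f') = Zf g N' (e ∘ f) (e ∘ f') := by
  simp only [Zf, map_prod, embK_zeta, map_sub, embK_zz, Function.comp_apply]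

lemma Zf_congr {N m k : ℕ} {f f₁ : Fin m → Fin N} {f' f₁' : Fin k → Fin N}
    (h : ∀ a, f a = f₁ a) (h' : ∀ b, f' b = f₁' b) : Zf g N f f' = Zf g N f₁ f₁' := by
  obtain rfl := funext h; obtain rfl := funext h'; rfl

lemma Zf_comp_left {N m k : ℕ} (f : Fin m → Fin N) (f' : Fin k → Fin N) (τ : Equiv.Perm (Fin m)) :
    Zf g N (f ∘ ⇑τ) f' = Zf g N f f' :=
  Equiv.prod_comp τ (fun a => ∏ b, zeta g N (zz g N (f a) - zz g N (f' b)))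

lemma Zf_comp_right {N m k : ℕ} (f : Fin m → Fin N) (f' : Fin k → Fin N) (τ : Equiv.Perm (Fin k)) :
    Zf g N f (f' ∘ ⇑τ) = Zf g N f f' :=
  Finset.prod_congr rfl fun a _ =>
    Equiv.prod_comp τ (fun b => zeta g N (zz g N (f a) - zz g N (f' b)))

lemma Zf_splitL {N p q k : ℕ} (f : Fin (p+q) → Fin N) (f' : Fin k → Fin N) :
    Zf g N f f' = Zf g N (f ∘ Fin.castAdd q) f' * Zf g N (f ∘ Fin.natAdd p) f' :=
  Fin.prod_univ_add _

lemma Zf_splitR {N m p q : ℕ} (f : Fin m → Fin N) (f' : Fin (p+q) → Fin N) :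
    Zf g N f f' = Zf g N f (f' ∘ Fin.castAdd q) * Zf g N f (f' ∘ Fin.natAdd p) := by
  rw [Zf, Zf, Zf, ← Finset.prod_mul_distrib]
  exact Finset.prod_congr rfl fun a _ => Fin.prod_univ_add _

/-- Extension of a permutation of the first block by the identity. -/
def extL {m : ℕ} (k : ℕ) (τ : Equiv.Perm (Fin m)) : Equiv.Perm (Fin (m + k)) :=
  finSumFinEquiv.permCongr (Equiv.sumCongr τ (Equiv.refl (Fin k)))

lemma extL_castAdd {m k : ℕ} (τ : Equiv.Perm (Fin m)) (a : Fin m) :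
    extL k τ (Fin.castAdd k a) = Fin.castAdd k (τ a) := by
  simp [extL, Equiv.permCongr_apply]

lemma extL_natAdd {m k : ℕ} (τ : Equiv.Perm (Fin m)) (b : Fin k) :
    extL k τ (Fin.natAdd m b) = Fin.natAdd m b := by
  simp [extL, Equiv.permCongr_apply]

/-- Extension of a permutation of the second block by the identity. -/
def extR {k : ℕ} (m : ℕ) (τ : Equiv.Perm (Fin k)) : Equiv.Perm (Fin (m + k)) :=
  finSumFinEquiv.permCongr (Equiv.sumCongr (Equiv.refl (Fin m)) τ)

lemma extR_castAdd {m k : ℕ} (τ : Equiv.Perm (Fin k)) (a : Fin m) :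
    extR m τ (Fin.castAdd k a) = Fin.castAdd k a := by
  simp [extR, Equiv.permCongr_apply]

lemma extR_natAdd {m k : ℕ} (τ : Equiv.Perm (Fin k)) (b : Fin k) :
    extR m τ (Fin.natAdd m b) = Fin.natAdd m (τ b) := by
  simp [extR, Equiv.permCongr_apply]

/-- The common integrand of the flattened triple shuffle. -/
def core (g : ℕ) {n n' n'' N : ℕ} (f₁ : Fin n → Fin N) (f₂ : Fin n' → Fin N)
    (f₃ : Fin n'' → Fin N) (R : MvPolynomial (Fin n) (F g)) (R' : MvPolynomial (Fin n') (F g))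
    (R'' : MvPolynomial (Fin n'') (F g)) : Kn g N :=
  ι g N (rename f₁ R) * ι g N (rename f₂ R') * ι g N (rename f₃ R'') *
    (Zf g N f₁ f₂ * Zf g N f₁ f₃ * Zf g N f₂ f₃)

lemma embK_core {n n' n'' N N' : ℕ} (e : Fin N → Fin N') (he : Function.Injective e)
    (f₁ : Fin n → Fin N) (f₂ : Fin n' → Fin N) (f₃ : Fin n'' → Fin N)
    (R : MvPolynomial (Fin n) (F g)) (R' : MvPolynomial (Fin n') (F g))
    (R'' : MvPolynomial (Fin n'') (F g)) :
    embK g e he (core g f₁ f₂ f₃ R R' R'') = core g (e∘f₁) (e∘f₂) (e∘f₃) R R' R'' := by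
  simp only [core, map_mul, embK_ι, rename_rename, embK_Zf]

lemma core_congr {n n' n'' N : ℕ} {f₁ f₁' : Fin n → Fin N} {f₂ f₂' : Fin n' → Fin N}
    {f₃ f₃' : Fin n'' → Fin N} (h₁ : ∀ a, f₁ a = f₁' a) (h₂ : ∀ a, f₂ a = f₂' a)
    (h₃ : ∀ a, f₃ a = f₃' a) (R : MvPolynomial (Fin n) (F g)) (R' : MvPolynomial (Fin n') (F g))
    (R'' : MvPolynomial (Fin n'') (F g)) :
    core g f₁ f₂ f₃ R R' R'' = core g f₁' f₂' f₃' R R' R'' := by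
  obtain rfl := funext h₁; obtain rfl := funext h₂; obtain rfl := funext h₃; rfl

/-- Symmetrization over all permutations of the variables. -/
def SymSum (g : ℕ) {N : ℕ} (E : Kn g N) : Kn g N :=
  ∑ σ : Equiv.Perm (Fin N), embK g ⇑σ σ.injective E

lemma embK_conj {N N' : ℕ} (e : Fin N ≃ Fin N') (σ : Equiv.Perm (Fin N)) (E : Kn g N) :
    embK g ⇑e e.injective (embK g ⇑σ σ.injective E) =
      embK g ⇑(e.permCongr σ) (e.permCongr σ).injective (embK g ⇑e e.injective E) := by
  rw [embK_comp, embK_comp]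
  exact embK_congr _ _ (fun a => by simp [Equiv.permCongr_apply]) E

lemma embK_symSum {N N' : ℕ} (e : Fin N ≃ Fin N') (E : Kn g N) :
    embK g ⇑e e.injective (SymSum g E) = SymSum g (embK g ⇑e e.injective E) := by
  rw [SymSum, map_sum, SymSum,
    ← Equiv.sum_comp e.permCongr
      (fun ρ => embK g ⇑ρ ρ.injective (embK g ⇑e e.injective E))]
  exact Finset.sum_congr rfl fun σ _ => embK_conj e σ E

end ShufAux


namespace ShufAux

lemma shuffle_eq (g n n' : ℕ) (R : MvPolynomial (Fin n) (F g))
    (R' : MvPolynomial (Fin n') (F g)) :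
    shuffle g n n' R R' =
      ((n.factorial * n'.factorial : ℕ) : Kn g (n+n'))⁻¹ *
        ∑ σ : Equiv.Perm (Fin (n+n')), embK g ⇑σ σ.injective
          (ι g (n+n') (rename (Fin.castAdd n') R) * ι g (n+n') (rename (Fin.natAdd n) R') *
            Zf g (n+n') (Fin.castAdd n') (Fin.natAdd n)) := by
  unfold shuffle
  congr 1
  refine Finset.sum_congr rfl fun σ _ => ?_
  rw [permK_apply, map_mul (ι g (n+n'))]
  rfl

lemma lhs_flat (g n n' n'' : ℕ) (R : MvPolynomial (Fin n) (F g))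
    (R' : MvPolynomial (Fin n') (F g)) (R'' : MvPolynomial (Fin n'') (F g))
    (Q : MvPolynomial (Fin (n+n')) (F g)) (hQ : ι g (n+n') Q = shuffle g n n' R R') :
    shuffle g (n+n') n'' Q R'' =
      ((n.factorial * n'.factorial * n''.factorial : ℕ) : Kn g (n+n'+n''))⁻¹ *
        SymSum g (core g (Fin.castAdd n'' ∘ Fin.castAdd n') (Fin.castAdd n'' ∘ Fin.natAdd n)
          (Fin.natAdd (n+n')) R R' R'') := by
  have hcA : Function.Injective (Fin.castAdd n'' : Fin (n+n') → Fin (n+n'+n'')) :=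
    Fin.castAdd_injective _ _
  -- notation
  set E : Kn g (n+n') :=
    ι g (n+n') (rename (Fin.castAdd n') R) * ι g (n+n') (rename (Fin.natAdd n) R') *
      Zf g (n+n') (Fin.castAdd n') (Fin.natAdd n) with hE
  set B : Kn g (n+n'+n'') := ι g (n+n'+n'') (rename (Fin.natAdd (n+n')) R'') with hB
  set Z : Kn g (n+n'+n'') := Zf g (n+n'+n'') (Fin.castAdd n'') (Fin.natAdd (n+n')) with hZ
  set W : Kn g (n+n'+n'') := core g (Fin.castAdd n'' ∘ Fin.castAdd n')
    (Fin.castAdd n'' ∘ Fin.natAdd n) (Fin.natAdd (n+n')) R R' R'' with hWdef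
  -- W in product form
  have hW0 : W = embK g (Fin.castAdd n'') hcA E * (B * Z) := by
    rw [hWdef, hE, hB, hZ, map_mul, map_mul, embK_ι, embK_ι, rename_rename, rename_rename,
      embK_Zf, core, Zf_splitL (Fin.castAdd n'' : Fin (n+n') → Fin (n+n'+n''))
        (Fin.natAdd (n+n'))]
    ring
  -- translates of W
  have hVτ : ∀ τ : Equiv.Perm (Fin (n+n')),
      embK g ⇑(extL n'' τ) (extL n'' τ).injective W =
        embK g (Fin.castAdd n'' ∘ ⇑τ) (hcA.comp τ.injective) E * (B * Z) := by
    intro τ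
    rw [hW0,
      map_mul (embK g ⇑(extL n'' τ) (extL n'' τ).injective)
        (embK g (Fin.castAdd n'') hcA E) (B * Z),
      map_mul (embK g ⇑(extL n'' τ) (extL n'' τ).injective) B Z, embK_comp]
    congr 1
    · exact embK_congr _ _ (fun a => extL_castAdd τ a) E
    congr 1
    · rw [hB, embK_ι, rename_rename,
        show ⇑(extL n'' τ) ∘ Fin.natAdd (n+n') = Fin.natAdd (n+n') from
          funext (extL_natAdd τ)]
    · rw [hZ]
      calc embK g ⇑(extL n'' τ) (extL n'' τ).injective
            (Zf g (n+n'+n'') (Fin.castAdd n'') (Fin.natAdd (n+n')))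
          = Zf g (n+n'+n'') (⇑(extL n'' τ) ∘ Fin.castAdd n'')
              (⇑(extL n'' τ) ∘ Fin.natAdd (n+n')) := embK_Zf _ _ _ _
        _ = Zf g (n+n'+n'') ((Fin.castAdd n'') ∘ ⇑τ) (Fin.natAdd (n+n')) :=
            Zf_congr (fun a => extL_castAdd τ a) (fun b => extL_natAdd τ b)
        _ = Zf g (n+n'+n'') (Fin.castAdd n'') (Fin.natAdd (n+n')) := Zf_comp_left _ _ τ
  -- the base expression
  have hbase :
      ι g (n+n'+n'') (rename (Fin.castAdd n'') Q) * B * Z =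
      ((n.factorial * n'.factorial : ℕ) : Kn g (n+n'+n''))⁻¹ *
        ∑ τ : Equiv.Perm (Fin (n+n')), embK g ⇑(extL n'' τ) (extL n'' τ).injective W := by
    rw [← embK_ι (Fin.castAdd n'') hcA Q, hQ, shuffle_eq, map_mul, map_inv₀, map_natCast,
      map_sum, mul_assoc, mul_assoc, Finset.sum_mul]
    congr 1
    refine Finset.sum_congr rfl fun τ _ => ?_
    rw [hVτ τ, embK_comp]
  -- main computation
  rw [shuffle_eq]
  have hsum : ∑ σ : Equiv.Perm (Fin (n+n'+n'')), embK g ⇑σ σ.injective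
        (ι g (n+n'+n'') (rename (Fin.castAdd n'') Q) * B * Z) =
      ∑ σ : Equiv.Perm (Fin (n+n'+n'')),
        (((n.factorial * n'.factorial : ℕ) : Kn g (n+n'+n''))⁻¹ *
          ∑ τ : Equiv.Perm (Fin (n+n')),
            embK g ⇑(σ * extL n'' τ) (σ * extL n'' τ).injective W) := by
    refine Finset.sum_congr rfl fun σ _ => ?_
    rw [hbase, map_mul, map_inv₀, map_natCast, map_sum]
    refine congrArg (HMul.hMul _) ?_
    refine Finset.sum_congr rfl fun τ _ => ?_
    rw [embK_comp]
    exact embK_congr _ _ (fun x => rfl) W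
  rw [hsum, ← Finset.mul_sum, Finset.sum_comm]
  have hre : ∀ τ : Equiv.Perm (Fin (n+n')),
      (∑ σ : Equiv.Perm (Fin (n+n'+n'')),
        embK g ⇑(σ * extL n'' τ) (σ * extL n'' τ).injective W) =
      ∑ σ : Equiv.Perm (Fin (n+n'+n'')), embK g ⇑σ σ.injective W := by
    intro τ
    exact Equiv.sum_comp (Equiv.mulRight (extL n'' τ))
      (fun ρ => embK g ⇑ρ ρ.injective W)
  rw [Finset.sum_congr rfl (fun τ _ => hre τ), Finset.sum_const, Finset.card_univ,
    nsmul_eq_mul]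
  have hcard : ((Fintype.card (Equiv.Perm (Fin (n+n'))) : ℕ) : Kn g (n+n'+n'')) =
      (((n+n').factorial : ℕ) : Kn g (n+n'+n'')) := by
    rw [Fintype.card_perm, Fintype.card_fin]
  rw [hcard]
  have hfac : ∀ k : ℕ, ((k.factorial : ℕ) : Kn g (n+n'+n'')) ≠ 0 :=
    fun k => Nat.cast_ne_zero.mpr (Nat.factorial_ne_zero k)
  have hc : (((n+n').factorial * n''.factorial : ℕ) : Kn g (n+n'+n''))⁻¹ *
      ((((n.factorial * n'.factorial : ℕ) : Kn g (n+n'+n'')))⁻¹ *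
        (((n+n').factorial : ℕ) : Kn g (n+n'+n''))) =
      ((n.factorial * n'.factorial * n''.factorial : ℕ) : Kn g (n+n'+n''))⁻¹ := by
    have hA := hfac (n+n')
    have hB2 := hfac n''
    have hC := hfac n
    have hD := hfac n'
    push_cast
    field_simp
  have hSS : SymSum g W =
      ∑ σ : Equiv.Perm (Fin (n+n'+n'')), embK g ⇑σ σ.injective W := rfl
  rw [hSS, ← hc]
  ring

end ShufAux

namespace ShufAux

lemma rhs_flat (g n n' n'' : ℕ) (R : MvPolynomial (Fin n) (F g))
    (R' : MvPolynomial (Fin n') (F g)) (R'' : MvPolynomial (Fin n'') (F g))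
    (Q' : MvPolynomial (Fin (n'+n'')) (F g)) (hQ' : ι g (n'+n'') Q' = shuffle g n' n'' R' R'') :
    shuffle g n (n'+n'') R Q' =
      ((n.factorial * n'.factorial * n''.factorial : ℕ) : Kn g (n+(n'+n'')))⁻¹ *
        SymSum g (core g (Fin.castAdd (n'+n'')) (Fin.natAdd n ∘ Fin.castAdd n'')
          (Fin.natAdd n ∘ Fin.natAdd n') R R' R'') := by
  have hnA : Function.Injective (Fin.natAdd n : Fin (n'+n'') → Fin (n+(n'+n''))) :=
    natAdd_inj
  set E : Kn g (n'+n'') :=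
    ι g (n'+n'') (rename (Fin.castAdd n'') R') * ι g (n'+n'') (rename (Fin.natAdd n') R'') *
      Zf g (n'+n'') (Fin.castAdd n'') (Fin.natAdd n') with hE
  set A : Kn g (n+(n'+n'')) := ι g (n+(n'+n'')) (rename (Fin.castAdd (n'+n'')) R) with hA
  set Z : Kn g (n+(n'+n'')) := Zf g (n+(n'+n'')) (Fin.castAdd (n'+n'')) (Fin.natAdd n) with hZ
  set W : Kn g (n+(n'+n'')) := core g (Fin.castAdd (n'+n'')) (Fin.natAdd n ∘ Fin.castAdd n'')
    (Fin.natAdd n ∘ Fin.natAdd n') R R' R'' with hWdef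
  have hW0 : W = A * embK g (Fin.natAdd n) hnA E * Z := by
    rw [hWdef, hE, hA, hZ, map_mul, map_mul, embK_ι, embK_ι, rename_rename, rename_rename,
      embK_Zf, core, Zf_splitR (Fin.castAdd (n'+n'') : Fin n → Fin (n+(n'+n'')))
        (Fin.natAdd n : Fin (n'+n'') → Fin (n+(n'+n'')))]
    ring
  have hVτ : ∀ τ : Equiv.Perm (Fin (n'+n'')),
      embK g ⇑(extR n τ) (extR n τ).injective W =
        A * embK g (Fin.natAdd n ∘ ⇑τ) (hnA.comp τ.injective) E * Z := by
    intro τ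
    rw [hW0,
      map_mul (embK g ⇑(extR n τ) (extR n τ).injective) (A * embK g (Fin.natAdd n) hnA E) Z,
      map_mul (embK g ⇑(extR n τ) (extR n τ).injective) A (embK g (Fin.natAdd n) hnA E),
      embK_comp]
    congr 1
    congr 1
    · rw [hA, embK_ι, rename_rename,
        show ⇑(extR n τ) ∘ Fin.castAdd (n'+n'') = Fin.castAdd (n'+n'') from
          funext (extR_castAdd τ)]
    · exact embK_congr _ _ (fun b => extR_natAdd τ b) E
    · rw [hZ]
      calc embK g ⇑(extR n τ) (extR n τ).injective
            (Zf g (n+(n'+n'')) (Fin.castAdd (n'+n'')) (Fin.natAdd n))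
          = Zf g (n+(n'+n'')) (⇑(extR n τ) ∘ Fin.castAdd (n'+n''))
              (⇑(extR n τ) ∘ Fin.natAdd n) := embK_Zf _ _ _ _
        _ = Zf g (n+(n'+n'')) (Fin.castAdd (n'+n'')) ((Fin.natAdd n) ∘ ⇑τ) :=
            Zf_congr (fun a => extR_castAdd τ a) (fun b => extR_natAdd τ b)
        _ = Zf g (n+(n'+n'')) (Fin.castAdd (n'+n'')) (Fin.natAdd n) := Zf_comp_right _ _ τ
  have hbase :
      A * ι g (n+(n'+n'')) (rename (Fin.natAdd n) Q') * Z =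
      ((n'.factorial * n''.factorial : ℕ) : Kn g (n+(n'+n'')))⁻¹ *
        ∑ τ : Equiv.Perm (Fin (n'+n'')), embK g ⇑(extR n τ) (extR n τ).injective W := by
    rw [← embK_ι (Fin.natAdd n) hnA Q', hQ', shuffle_eq, map_mul, map_inv₀, map_natCast,
      map_sum]
    have hrearr : ∀ S : Kn g (n+(n'+n'')),
        A * (((n'.factorial * n''.factorial : ℕ) : Kn g (n+(n'+n'')))⁻¹ * S) * Z =
          ((n'.factorial * n''.factorial : ℕ) : Kn g (n+(n'+n'')))⁻¹ * (A * S * Z) :=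
      fun S => by ring
    rw [hrearr, Finset.mul_sum, Finset.sum_mul]
    congr 1
    refine Finset.sum_congr rfl fun τ _ => ?_
    rw [embK_comp, hVτ τ]
  rw [shuffle_eq]
  have hsum : ∑ σ : Equiv.Perm (Fin (n+(n'+n''))), embK g ⇑σ σ.injective
        (A * ι g (n+(n'+n'')) (rename (Fin.natAdd n) Q') * Z) =
      ∑ σ : Equiv.Perm (Fin (n+(n'+n''))),
        (((n'.factorial * n''.factorial : ℕ) : Kn g (n+(n'+n'')))⁻¹ *
          ∑ τ : Equiv.Perm (Fin (n'+n'')),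
            embK g ⇑(σ * extR n τ) (σ * extR n τ).injective W) := by
    refine Finset.sum_congr rfl fun σ _ => ?_
    rw [hbase, map_mul, map_inv₀, map_natCast, map_sum]
    refine congrArg (HMul.hMul _) ?_
    refine Finset.sum_congr rfl fun τ _ => ?_
    rw [embK_comp]
    exact embK_congr _ _ (fun x => rfl) W
  rw [hsum, ← Finset.mul_sum, Finset.sum_comm]
  have hre : ∀ τ : Equiv.Perm (Fin (n'+n'')),
      (∑ σ : Equiv.Perm (Fin (n+(n'+n''))),
        embK g ⇑(σ * extR n τ) (σ * extR n τ).injective W) =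
      ∑ σ : Equiv.Perm (Fin (n+(n'+n''))), embK g ⇑σ σ.injective W := by
    intro τ
    exact Equiv.sum_comp (Equiv.mulRight (extR n τ))
      (fun ρ => embK g ⇑ρ ρ.injective W)
  rw [Finset.sum_congr rfl (fun τ _ => hre τ), Finset.sum_const, Finset.card_univ,
    nsmul_eq_mul]
  have hcard : ((Fintype.card (Equiv.Perm (Fin (n'+n''))) : ℕ) : Kn g (n+(n'+n''))) =
      (((n'+n'').factorial : ℕ) : Kn g (n+(n'+n''))) := by
    rw [Fintype.card_perm, Fintype.card_fin]
  rw [hcard]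
  have hfac : ∀ k : ℕ, ((k.factorial : ℕ) : Kn g (n+(n'+n''))) ≠ 0 :=
    fun k => Nat.cast_ne_zero.mpr (Nat.factorial_ne_zero k)
  have hc : ((n.factorial * (n'+n'').factorial : ℕ) : Kn g (n+(n'+n'')))⁻¹ *
      ((((n'.factorial * n''.factorial : ℕ) : Kn g (n+(n'+n''))))⁻¹ *
        (((n'+n'').factorial : ℕ) : Kn g (n+(n'+n'')))) =
      ((n.factorial * n'.factorial * n''.factorial : ℕ) : Kn g (n+(n'+n'')))⁻¹ := by
    have hA2 := hfac (n'+n'')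
    have hB2 := hfac n''
    have hC := hfac n
    have hD := hfac n'
    push_cast
    field_simp
  have hSS : SymSum g W =
      ∑ σ : Equiv.Perm (Fin (n+(n'+n''))), embK g ⇑σ σ.injective W := rfl
  rw [hSS, ← hc]
  ring

end ShufAux

open ShufAux in
theorem shuffle_assoc' (g n n' n'' : ℕ)
    (R : MvPolynomial (Fin n) (F g)) (R' : MvPolynomial (Fin n') (F g))
    (R'' : MvPolynomial (Fin n'') (F g))
    (Q : MvPolynomial (Fin (n+n')) (F g)) (hQ : ι g (n+n') Q = shuffle g n n' R R')
    (Q' : MvPolynomial (Fin (n'+n'')) (F g)) (hQ' : ι g (n'+n'') Q' = shuffle g n' n'' R' R'') :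
    castK g (Nat.add_assoc n n' n'') (shuffle g (n+n') n'' Q R'') =
      shuffle g n (n'+n'') R Q' := by
  rw [lhs_flat g n n' n'' R R' R'' Q hQ, rhs_flat g n n' n'' R R' R'' Q' hQ',
    castK_apply, map_mul, map_inv₀, map_natCast,
    embK_symSum (finCongr (Nat.add_assoc n n' n'')), embK_core]
  congr 1
  refine congrArg (SymSum g) (core_congr ?_ ?_ ?_ R R' R'')
  · intro a
    simp only [Function.comp_apply, finCongr_apply, Fin.ext_iff, Fin.coe_cast,
      Fin.coe_castAdd]
  · intro a
    simp only [Function.comp_apply, finCongr_apply, Fin.ext_iff, Fin.coe_cast,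
      Fin.coe_castAdd, Fin.coe_natAdd]
  · intro a
    simp only [Function.comp_apply, finCongr_apply, Fin.ext_iff, Fin.coe_cast,
      Fin.coe_natAdd]
    omega

/- STATEMENT 2: The shuffle product
`(R * R')(z_1,…,z_{n+n'}) = (1/(n! n'!)) · Sym[ R(z_1,…,z_n) R'(z_{n+1},…,z_{n+n'})
∏_{a ≤ n < b} ζ(z_a - z_b) ]` is associative: `(R * R') * R'' = R * (R' * R'')` for all
symmetric polynomials `R, R', R''` over `F = ℚ(ħ, u_1,…,u_g)`.  Since the shuffle
product of two symmetric polynomials is a priori a rational function (part of the claim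
being that it is in fact a polynomial), the intermediate products `R * R'` and
`R' * R''` are recorded as polynomials `Q` and `Q'`. -/

theorem shuffle_assoc (g n n' n'' : ℕ)
    (R : MvPolynomial (Fin n) (F g)) (R' : MvPolynomial (Fin n') (F g))
    (R'' : MvPolynomial (Fin n'') (F g))
    (hR : SymPoly g n R) (hR' : SymPoly g n' R') (hR'' : SymPoly g n'' R'')
    (Q : MvPolynomial (Fin (n+n')) (F g)) (hQ : ι g (n+n') Q = shuffle g n n' R R')
    (Q' : MvPolynomial (Fin (n'+n'')) (F g)) (hQ' : ι g (n'+n'') Q' = shuffle g n' n'' R' R'') :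
    castK g (Nat.add_assoc n n' n'') (shuffle g (n+n') n'' Q R'') =
      shuffle g n (n'+n'') R Q' :=
  shuffle_assoc' g n n' n'' R R' R'' Q hQ Q' hQ'
end
end

section
/- The set S⁺ of symmetric polynomials satisfying the wheel conditions is closed under the shuffle product: if R ∈ S⁺ has n variables and R' ∈ S⁺ has n' variables, then R * R' satisfies the wheel conditions in n + n' variables. -/
open MvPolynomial
set_option synthInstance.maxHeartbeats 1000000
set_option maxHeartbeats 1000000

noncomputable section

/-- The wheel conditions: for every loop `e` and pairwise distinct indices `a, b, c`,
`R` vanishes on the locus `{z_a + u_e = z_b, z_b + ħ - u_e = z_c}` (substituting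
`z_b ↦ z_a + u_e`, `z_c ↦ z_a + ħ`) and on the locus
`{z_a + ħ - u_e = z_b, z_b + u_e = z_c}` (substituting `z_b ↦ z_a + ħ - u_e`,
`z_c ↦ z_a + ħ`). -/
def Wheel (g n : ℕ) (R : MvPolynomial (Fin n) (F g)) : Prop :=
  ∀ e : Fin g, ∀ a b c : Fin n, a ≠ b → b ≠ c → a ≠ c →
    (aeval (fun v : Fin n =>
        if v = b then X a + C (uu g e)
        else if v = c then X a + C (hbar g)
        else (X v : MvPolynomial (Fin n) (F g))) R = 0) ∧
    (aeval (fun v : Fin n =>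
        if v = b then X a + C (hbar g) - C (uu g e)
        else if v = c then X a + C (hbar g)
        else (X v : MvPolynomial (Fin n) (F g))) R = 0)

/- STATEMENT 4: The set `S⁺` of symmetric polynomials satisfying the wheel conditions is
closed under the shuffle product: if `R ∈ S⁺` has `n` variables and `R' ∈ S⁺` has `n'`
variables, then `R * R'` (a polynomial `Q` with `ι Q = shuffle R R'`) satisfies the wheel
conditions in `n + n'` variables. -/

/-! ### Auxiliary lemmas -/

lemma permK_ι (g N : ℕ) (σ : Equiv.Perm (Fin N)) (P : MvPolynomial (Fin N) (F g)) :
    permK g N σ (ι g N P) = ι g N (rename σ P) :=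
  IsFractionRing.ringEquivOfRingEquiv_algebraMap _ P

lemma ι_inj (g N : ℕ) : Function.Injective (ι g N) :=
  IsFractionRing.injective _ _

instance (g : ℕ) : CharZero (F g) :=
  charZero_of_injective_algebraMap (IsFractionRing.injective (MvPolynomial (Fin (g+1)) ℚ) (F g))

instance (g N : ℕ) : CharZero (Kn g N) :=
  charZero_of_injective_algebraMap (IsFractionRing.injective (MvPolynomial (Fin N) (F g)) (Kn g N))

lemma hbar_ne_zero (g : ℕ) : hbar g ≠ 0 := by
  simp only [hbar, Ne, map_eq_zero_iff _ (IsFractionRing.injective (MvPolynomial (Fin (g+1)) ℚ) (F g))]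
  exact X_ne_zero 0

lemma uu_ne_zero (g : ℕ) (e : Fin g) : uu g e ≠ 0 := by
  simp only [uu, Ne, map_eq_zero_iff _ (IsFractionRing.injective (MvPolynomial (Fin (g+1)) ℚ) (F g))]
  exact X_ne_zero _

lemma uu_ne_hbar (g : ℕ) (e : Fin g) : uu g e ≠ hbar g := by
  simp only [uu, hbar, Ne]
  intro h
  have := (IsFractionRing.injective (MvPolynomial (Fin (g+1)) ℚ) (F g)) h
  have h2 := MvPolynomial.X_injective this
  exact (Fin.succ_ne_zero e) h2

lemma zz_ne_zz (g N : ℕ) {x y : Fin N} (h : x ≠ y) : zz g N x ≠ zz g N y := by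
  intro hh; exact h (MvPolynomial.X_injective (ι_inj g N hh))

/-! ### The numerator of ζ -/

def zetaNumF (g : ℕ) (x : F g) : F g :=
  (x - hbar g) * ∏ e : Fin g, (x + uu g e) * (x + hbar g - uu g e)

def zetaNumPoly (g N : ℕ) (y : MvPolynomial (Fin N) (F g)) : MvPolynomial (Fin N) (F g) :=
  (y - C (hbar g)) * ∏ e : Fin g, (y + C (uu g e)) * (y + C (hbar g) - C (uu g e))

lemma ι_zetaNumPoly (g N : ℕ) (y : MvPolynomial (Fin N) (F g)) (hy : ι g N y ≠ 0) :
    ι g N (zetaNumPoly g N y) = ι g N y * zeta g N (ι g N y) := by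
  unfold zetaNumPoly zeta cc
  rw [map_mul, map_sub, map_prod]
  have h1 : ∀ e : Fin g, ι g N ((y + C (uu g e)) * (y + C (hbar g) - C (uu g e)))
      = (ι g N y + ι g N (C (uu g e))) * (ι g N y + ι g N (C (hbar g)) - ι g N (C (uu g e))) := by
    intro e; rw [map_mul, map_add, map_sub, map_add]
  rw [Finset.prod_congr rfl (fun e _ => h1 e)]
  field_simp

lemma aeval_zetaNumPoly (g N M : ℕ) (w : Fin N → MvPolynomial (Fin M) (F g))
    (y : MvPolynomial (Fin N) (F g)) (s : F g) (hy : aeval w y = C s) :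
    aeval w (zetaNumPoly g N y) = C (zetaNumF g s) := by
  unfold zetaNumPoly zetaNumF
  rw [map_mul, map_sub, map_prod]
  simp only [hy, aeval_C, algebraMap_eq]
  rw [C_mul, map_prod (C : F g →+* MvPolynomial (Fin M) (F g))]
  congr 1
  · rw [C_sub]
  apply Finset.prod_congr rfl
  intro e _
  rw [map_mul, map_add, map_sub, map_add]
  simp only [hy, aeval_C, algebraMap_eq, C_mul, C_add, C_sub]

lemma zetaNumF_neg_uu (g : ℕ) (e : Fin g) : zetaNumF g (-(uu g e)) = 0 := by
  unfold zetaNumF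
  apply mul_eq_zero_of_right
  apply Finset.prod_eq_zero (Finset.mem_univ e)
  apply mul_eq_zero_of_left
  ring

lemma zetaNumF_uu_sub_hbar (g : ℕ) (e : Fin g) : zetaNumF g (uu g e - hbar g) = 0 := by
  unfold zetaNumF
  apply mul_eq_zero_of_right
  apply Finset.prod_eq_zero (Finset.mem_univ e)
  apply mul_eq_zero_of_right
  ring

lemma zetaNumF_hbar (g : ℕ) : zetaNumF g (hbar g) = 0 := by
  unfold zetaNumF
  apply mul_eq_zero_of_left
  ring

/-! ### The denominator-clearing polynomials -/

def dfac (g N : ℕ) (x y : Fin N) : MvPolynomial (Fin N) (F g) :=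
  if x = y then 1 else X x - X y
def dP (g N : ℕ) : MvPolynomial (Fin N) (F g) := ∏ x : Fin N, ∏ y : Fin N, dfac g N x y
def wfac (g n n' : ℕ) (x y : Fin (n+n')) : MvPolynomial (Fin (n+n')) (F g) :=
  if x = y then 1 else
    if (x:ℕ) < n ∧ n ≤ (y:ℕ) then zetaNumPoly g (n+n') (X x - X y) else X x - X y
def wP (g n n' : ℕ) : MvPolynomial (Fin (n+n')) (F g) :=
  ∏ x : Fin (n+n'), ∏ y : Fin (n+n'), wfac g n n' x y

lemma rename_dP (g N : ℕ) (σ : Equiv.Perm (Fin N)) : rename σ (dP g N) = dP g N := by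
  unfold dP dfac
  rw [map_prod]
  have h1 : ∀ x : Fin N, rename σ (∏ y : Fin N, if x = y then 1 else X x - X y)
      = ∏ y : Fin N, (if (σ x : Fin N) = σ y then 1 else (X (σ x) - X (σ y) : MvPolynomial (Fin N) (F g))) := by
    intro x
    rw [map_prod]
    apply Finset.prod_congr rfl
    intro y _
    rw [apply_ite (rename σ), map_sub, rename_X, rename_X, map_one]
    simp [Equiv.apply_eq_iff_eq]
  rw [Finset.prod_congr rfl (fun x _ => h1 x)]
  have h2 : ∀ x : Fin N, (∏ y : Fin N, if (σ x : Fin N) = σ y then 1 else (X (σ x) - X (σ y) : MvPolynomial (Fin N) (F g)))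
      = ∏ y : Fin N, if (σ x : Fin N) = y then 1 else X (σ x) - X y := by
    intro x
    exact Equiv.prod_comp σ (fun b => if (σ x : Fin N) = b then 1 else (X (σ x) - X b : MvPolynomial (Fin N) (F g)))
  rw [Finset.prod_congr rfl (fun x _ => h2 x)]
  exact Equiv.prod_comp σ (fun a => ∏ y : Fin N, if a = y then 1 else (X a - X y : MvPolynomial (Fin N) (F g)))

def Zprod (g n n' : ℕ) : Kn g (n+n') :=
  ∏ a : Fin n, ∏ b : Fin n',
    zeta g (n+n') (zz g (n+n') (Fin.castAdd n' a) - zz g (n+n') (Fin.natAdd n b))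

def zfac (g n n' : ℕ) (x y : Fin (n+n')) : Kn g (n+n') :=
  if (x:ℕ) < n ∧ n ≤ (y:ℕ) then zeta g (n+n') (zz g (n+n') x - zz g (n+n') y) else 1

lemma ι_wfac (g n n' : ℕ) (x y : Fin (n+n')) :
    ι g (n+n') (wfac g n n' x y) = ι g (n+n') (dfac g (n+n') x y) * zfac g n n' x y := by
  unfold wfac dfac zfac
  by_cases hxy : x = y
  · subst hxy
    rw [if_pos rfl, if_pos rfl, if_neg (by omega : ¬((x:ℕ) < n ∧ n ≤ (x:ℕ))), mul_one]
  · rw [if_neg hxy, if_neg hxy]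
    by_cases hc : (x:ℕ) < n ∧ n ≤ (y:ℕ)
    · rw [if_pos hc, if_pos hc]
      have hne : ι g (n+n') (X x - X y) ≠ 0 := by
        rw [map_sub]
        exact sub_ne_zero_of_ne (zz_ne_zz g (n+n') hxy)
      rw [ι_zetaNumPoly g (n+n') _ hne, map_sub]
      rfl
    · rw [if_neg hc, if_neg hc, mul_one]

lemma ι_wP (g n n' : ℕ) :
    ι g (n+n') (wP g n n') = ι g (n+n') (dP g (n+n')) * Zprod g n n' := by
  unfold wP dP
  rw [map_prod]
  have h1 : ∀ x, ι g (n+n') (∏ y, wfac g n n' x y)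
      = (∏ y, ι g (n+n') (dfac g (n+n') x y)) * ∏ y, zfac g n n' x y := by
    intro x
    rw [map_prod, ← Finset.prod_mul_distrib]
    exact Finset.prod_congr rfl (fun y _ => ι_wfac g n n' x y)
  rw [Finset.prod_congr rfl (fun x _ => h1 x), Finset.prod_mul_distrib, map_prod]
  congr 1
  · exact Finset.prod_congr rfl (fun x _ => (map_prod _ _ _).symm)
  unfold Zprod zfac
  rw [Fin.prod_univ_add]
  have hz2 : ∀ x : Fin n', (∏ y : Fin (n+n'), if ((Fin.natAdd n x : Fin (n+n')):ℕ) < n ∧ n ≤ (y:ℕ)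
      then zeta g (n+n') (zz g (n+n') (Fin.natAdd n x) - zz g (n+n') y) else 1) = 1 := by
    intro x
    apply Finset.prod_eq_one
    intro y _
    rw [if_neg]
    simp only [Fin.coe_natAdd]
    omega
  rw [Finset.prod_congr rfl (fun x _ => hz2 x), Finset.prod_const_one, mul_one]
  apply Finset.prod_congr rfl
  intro a _
  rw [Fin.prod_univ_add]
  have hz3 : ∀ y : Fin n, (if ((Fin.castAdd n' a : Fin (n+n')):ℕ) < n ∧ n ≤ ((Fin.castAdd n' y : Fin (n+n')):ℕ)
      then zeta g (n+n') (zz g (n+n') (Fin.castAdd n' a) - zz g (n+n') (Fin.castAdd n' y)) else 1) = 1 := by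
    intro y
    rw [if_neg]
    simp only [Fin.coe_castAdd]
    omega
  rw [Finset.prod_congr rfl (fun y _ => hz3 y), Finset.prod_const_one, one_mul]
  apply Finset.prod_congr rfl
  intro b _
  rw [if_pos]
  constructor
  · simp only [Fin.coe_castAdd]; exact a.isLt
  · simp only [Fin.coe_natAdd]; omega

/-! ### The main polynomial identity -/

lemma main_eq (g n n' : ℕ) (R : MvPolynomial (Fin n) (F g)) (R' : MvPolynomial (Fin n') (F g))
    (Q : MvPolynomial (Fin (n+n')) (F g)) (hQ : ι g (n+n') Q = shuffle g n n' R R') :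
    C ((n.factorial * n'.factorial : ℕ) : F g) * dP g (n+n') * Q
      = ∑ σ : Equiv.Perm (Fin (n+n')),
          rename σ ((rename (Fin.castAdd n') R * rename (Fin.natAdd n) R') * wP g n n') := by
  apply ι_inj g (n+n')
  set A := rename (Fin.castAdd n') R * rename (Fin.natAdd n) R' with hA
  set c : Kn g (n+n') := ((n.factorial * n'.factorial : ℕ) : Kn g (n+n')) with hc
  have hc0 : c ≠ 0 := by
    rw [hc]
    exact Nat.cast_ne_zero.mpr (Nat.mul_ne_zero (Nat.factorial_ne_zero _) (Nat.factorial_ne_zero _))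
  have hιC : ι g (n+n') (C ((n.factorial * n'.factorial : ℕ) : F g)) = c := by
    rw [map_natCast (C : F g →+* MvPolynomial (Fin (n+n')) (F g)), map_natCast]
  rw [map_mul, map_mul, hιC, hQ]
  rw [map_sum]
  have hterm : ∀ σ : Equiv.Perm (Fin (n+n')),
      ι g (n+n') (rename σ (A * wP g n n'))
        = ι g (n+n') (dP g (n+n')) *
          permK g (n+n') σ (ι g (n+n') A * Zprod g n n') := by
    intro σ
    rw [← permK_ι, map_mul (ι g (n+n')), ι_wP, ← mul_assoc, mul_comm (ι g (n+n') A), mul_assoc,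
      map_mul (permK g (n+n') σ), permK_ι, rename_dP]
  rw [Finset.sum_congr rfl (fun σ _ => hterm σ), ← Finset.mul_sum]
  unfold shuffle Zprod
  rw [← hc, ← hA]
  set S := ∑ σ : Equiv.Perm (Fin (n+n')), permK g (n+n') σ
    (ι g (n+n') A * ∏ a : Fin n, ∏ b : Fin n',
      zeta g (n+n') (zz g (n+n') (Fin.castAdd n' a) - zz g (n+n') (Fin.natAdd n b))) with hS
  calc c * ι g (n+n') (dP g (n+n')) * (c⁻¹ * S)
      = (c * c⁻¹) * (ι g (n+n') (dP g (n+n')) * S) := by ring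
    _ = ι g (n+n') (dP g (n+n')) * S := by rw [mul_inv_cancel₀ hc0, one_mul]

-- helper nonzero lemmas for the substitution values
lemma C_ne_X (g N : ℕ) (t : F g) (v : Fin N) : (C t : MvPolynomial (Fin N) (F g)) ≠ X v := by
  intro h
  have h2 := congrArg totalDegree h
  rw [totalDegree_C, totalDegree_X] at h2
  exact zero_ne_one h2

lemma X_add_C_ne_X (g N : ℕ) (t : F g) (ht : t ≠ 0) (α v : Fin N) :
    (X α + C t : MvPolynomial (Fin N) (F g)) ≠ X v := by
  by_cases hv : v = α
  · subst hv
    intro h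
    rw [add_eq_left] at h
    exact ht (by simpa using h)
  · intro h
    have h2 := congrArg (aeval (fun w : Fin N => if w = α then 0 else (X w : MvPolynomial (Fin N) (F g)))) h
    rw [map_add, aeval_X, aeval_X, if_pos rfl, if_neg hv, aeval_C, algebraMap_eq, zero_add] at h2
    exact C_ne_X g N t v h2

def wheelSub (g N : ℕ) (s₁ : F g) (α β γ : Fin N) : Fin N → MvPolynomial (Fin N) (F g) :=
  fun v => if v = β then X α + C s₁ else if v = γ then X α + C (hbar g) else X v


lemma wheelSub_inj (g N : ℕ) (s₁ : F g) (hs0 : s₁ ≠ 0) (hsh : s₁ ≠ hbar g)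
    (α β γ : Fin N) (hβγ : β ≠ γ) :
    ∀ x y : Fin N, x ≠ y → wheelSub g N s₁ α β γ x ≠ wheelSub g N s₁ α β γ y := by
  intro x y hxy h
  unfold wheelSub at h
  split_ifs at h with h1 h2 h3 h4 h5 h6 h7 h8
  all_goals first
    | exact hsh (by simpa using h)
    | exact hsh (by simpa using h.symm)
    | exact X_add_C_ne_X g N s₁ hs0 α _ h
    | exact X_add_C_ne_X g N (hbar g) (hbar_ne_zero g) α _ h
    | exact X_add_C_ne_X g N s₁ hs0 α _ h.symm
    | exact X_add_C_ne_X g N (hbar g) (hbar_ne_zero g) α _ h.symm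
    | exact hxy (MvPolynomial.X_injective h)
    | (exfalso; simp_all)

lemma pure_vanish (g n m : ℕ) (s₁ : F g) (R : MvPolynomial (Fin n) (F g))
    (HW : ∀ p q r : Fin n, p ≠ q → q ≠ r → p ≠ r →
      aeval (fun v : Fin n => if v = q then X p + C s₁ else if v = r then X p + C (hbar g)
        else (X v : MvPolynomial (Fin n) (F g))) R = 0)
    (w' : Fin n → MvPolynomial (Fin m) (F g)) (p₀ q₀ r₀ : Fin n)
    (h1 : p₀ ≠ q₀) (h2 : q₀ ≠ r₀) (h3 : p₀ ≠ r₀) (α : Fin m)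
    (hwp : w' p₀ = X α) (hwq : w' q₀ = X α + C s₁) (hwr : w' r₀ = X α + C (hbar g)) :
    aeval w' R = 0 := by
  have key := HW p₀ q₀ r₀ h1 h2 h3
  have hcomp : aeval w' R = aeval w' (aeval (fun v : Fin n =>
      if v = q₀ then X p₀ + C s₁ else if v = r₀ then X p₀ + C (hbar g)
      else (X v : MvPolynomial (Fin n) (F g))) R) := by
    rw [← AlgHom.comp_apply, comp_aeval]
    have hfun : (fun i : Fin n => aeval w' (if i = q₀ then X p₀ + C s₁
        else if i = r₀ then X p₀ + C (hbar g) else (X i : MvPolynomial (Fin n) (F g)))) = w' := by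
      funext v
      by_cases hq : v = q₀
      · subst hq; rw [if_pos rfl, map_add, aeval_X, aeval_C, hwp, hwq, algebraMap_eq]
      · rw [if_neg hq]
        by_cases hr : v = r₀
        · subst hr; rw [if_pos rfl, map_add, aeval_X, aeval_C, hwr, hwp, algebraMap_eq]
        · rw [if_neg hr, aeval_X]
    rw [hfun]
  rw [hcomp, key, map_zero]

lemma aeval_wP_eq_zero (g n n' m : ℕ) (w : Fin (n+n') → MvPolynomial (Fin m) (F g))
    (i j : Fin (n+n')) (hcross : (i:ℕ) < n ∧ n ≤ (j:ℕ)) (s : F g)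
    (hs : w i - w j = C s) (hz : zetaNumF g s = 0) :
    aeval w (wP g n n') = 0 := by
  unfold wP
  rw [map_prod]
  apply Finset.prod_eq_zero (Finset.mem_univ i)
  rw [map_prod]
  apply Finset.prod_eq_zero (Finset.mem_univ j)
  have hij : i ≠ j := by
    intro h; rw [h] at hcross; omega
  unfold wfac
  rw [if_neg hij, if_pos hcross,
    aeval_zetaNumPoly g _ m w _ s (by rw [map_sub, aeval_X, aeval_X]; exact hs), hz, map_zero]

lemma key_vanish (g n n' : ℕ) (s₁ : F g)
    (R : MvPolynomial (Fin n) (F g)) (R' : MvPolynomial (Fin n') (F g))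
    (HW : ∀ p q r : Fin n, p ≠ q → q ≠ r → p ≠ r →
      aeval (fun v : Fin n => if v = q then X p + C s₁ else if v = r then X p + C (hbar g)
        else (X v : MvPolynomial (Fin n) (F g))) R = 0)
    (HW' : ∀ p q r : Fin n', p ≠ q → q ≠ r → p ≠ r →
      aeval (fun v : Fin n' => if v = q then X p + C s₁ else if v = r then X p + C (hbar g)
        else (X v : MvPolynomial (Fin n') (F g))) R' = 0)
    (Z1 : zetaNumF g (-s₁) = 0) (Z2 : zetaNumF g (s₁ - hbar g) = 0)
    (Zh : zetaNumF g (hbar g) = 0)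
    (α β γ : Fin (n+n')) (hαβ : α ≠ β) (hβγ : β ≠ γ) (hαγ : α ≠ γ)
    (σ : Equiv.Perm (Fin (n+n'))) :
    aeval (wheelSub g (n+n') s₁ α β γ)
      (rename σ ((rename (Fin.castAdd n') R * rename (Fin.natAdd n) R') * wP g n n')) = 0 := by
  rw [aeval_rename]
  set w : Fin (n+n') → MvPolynomial (Fin (n+n')) (F g) := wheelSub g (n+n') s₁ α β γ ∘ σ with hw
  set p := σ.symm α with hp
  set q := σ.symm β with hq
  set r := σ.symm γ with hr
  have hσp : σ p = α := Equiv.apply_symm_apply σ α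
  have hσq : σ q = β := Equiv.apply_symm_apply σ β
  have hσr : σ r = γ := Equiv.apply_symm_apply σ γ
  have wp : w p = X α := by
    rw [hw]; simp only [Function.comp_apply, hσp]; unfold wheelSub
    rw [if_neg hαβ, if_neg hαγ]
  have wq : w q = X α + C s₁ := by
    rw [hw]; simp only [Function.comp_apply, hσq]; unfold wheelSub
    rw [if_pos rfl]
  have wr : w r = X α + C (hbar g) := by
    rw [hw]; simp only [Function.comp_apply, hσr]; unfold wheelSub
    rw [if_neg (Ne.symm hβγ), if_pos rfl]
  have hpq : p ≠ q := fun h => hαβ (σ.symm.injective h)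
  have hqr : q ≠ r := fun h => hβγ (σ.symm.injective h)
  have hpr : p ≠ r := fun h => hαγ (σ.symm.injective h)
  by_cases hbp : (p:ℕ) < n <;> by_cases hbq : (q:ℕ) < n <;> by_cases hbr : (r:ℕ) < n
  -- case TTT : all in first block
  · rw [map_mul, map_mul]
    have h0 : aeval w (rename (Fin.castAdd n') R) = 0 := by
      rw [aeval_rename]
      have cp : Fin.castAdd n' ⟨(p:ℕ), hbp⟩ = p := Fin.ext (by simp)
      have cq : Fin.castAdd n' ⟨(q:ℕ), hbq⟩ = q := Fin.ext (by simp)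
      have cr : Fin.castAdd n' ⟨(r:ℕ), hbr⟩ = r := Fin.ext (by simp)
      refine pure_vanish g n (n+n') s₁ R HW (w ∘ Fin.castAdd n')
        ⟨(p:ℕ), hbp⟩ ⟨(q:ℕ), hbq⟩ ⟨(r:ℕ), hbr⟩
        (fun h => hpq (by rw [← cp, ← cq, h])) (fun h => hqr (by rw [← cq, ← cr, h]))
        (fun h => hpr (by rw [← cp, ← cr, h])) α ?_ ?_ ?_
      · show w (Fin.castAdd n' ⟨(p:ℕ), hbp⟩) = X α; rw [cp, wp]
      · show w (Fin.castAdd n' ⟨(q:ℕ), hbq⟩) = X α + C s₁; rw [cq, wq]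
      · show w (Fin.castAdd n' ⟨(r:ℕ), hbr⟩) = X α + C (hbar g); rw [cr, wr]
    rw [h0, zero_mul, zero_mul]
  -- case TTF : p,q first, r second : pair (q,r), Z2
  · rw [map_mul]
    apply mul_eq_zero_of_right
    exact aeval_wP_eq_zero g n n' (n+n') w q r ⟨hbq, by omega⟩ (s₁ - hbar g)
      (by rw [wq, wr, C_sub]; ring) Z2
  -- case TFT : p,r first, q second : pair (p,q), Z1
  · rw [map_mul]
    apply mul_eq_zero_of_right
    exact aeval_wP_eq_zero g n n' (n+n') w p q ⟨hbp, by omega⟩ (-s₁)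
      (by rw [wp, wq, map_neg]; ring) Z1
  -- case TFF : p first, q,r second : pair (p,q), Z1
  · rw [map_mul]
    apply mul_eq_zero_of_right
    exact aeval_wP_eq_zero g n n' (n+n') w p q ⟨hbp, by omega⟩ (-s₁)
      (by rw [wp, wq, map_neg]; ring) Z1
  -- case FTT : q,r first, p second : pair (r,p), Zh
  · rw [map_mul]
    apply mul_eq_zero_of_right
    exact aeval_wP_eq_zero g n n' (n+n') w r p ⟨hbr, by omega⟩ (hbar g)
      (by rw [wp, wr]; ring) Zh
  -- case FTF : q first, p,r second : pair (q,r), Z2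
  · rw [map_mul]
    apply mul_eq_zero_of_right
    exact aeval_wP_eq_zero g n n' (n+n') w q r ⟨hbq, by omega⟩ (s₁ - hbar g)
      (by rw [wq, wr, C_sub]; ring) Z2
  -- case FFT : r first, p,q second : pair (r,p), Zh
  · rw [map_mul]
    apply mul_eq_zero_of_right
    exact aeval_wP_eq_zero g n n' (n+n') w r p ⟨hbr, by omega⟩ (hbar g)
      (by rw [wp, wr]; ring) Zh
  -- case FFF : all in second block
  · rw [map_mul, map_mul]
    have h0 : aeval w (rename (Fin.natAdd n) R') = 0 := by
      rw [aeval_rename]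
      have cp : Fin.natAdd n ⟨(p:ℕ) - n, by omega⟩ = p := Fin.ext (by simp; omega)
      have cq : Fin.natAdd n ⟨(q:ℕ) - n, by omega⟩ = q := Fin.ext (by simp; omega)
      have cr : Fin.natAdd n ⟨(r:ℕ) - n, by omega⟩ = r := Fin.ext (by simp; omega)
      refine pure_vanish g n' (n+n') s₁ R' HW' (w ∘ Fin.natAdd n)
        ⟨(p:ℕ) - n, by omega⟩ ⟨(q:ℕ) - n, by omega⟩ ⟨(r:ℕ) - n, by omega⟩
        (fun h => hpq (by rw [← cp, ← cq, h])) (fun h => hqr (by rw [← cq, ← cr, h]))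
        (fun h => hpr (by rw [← cp, ← cr, h])) α ?_ ?_ ?_
      · show w (Fin.natAdd n ⟨(p:ℕ) - n, by omega⟩) = X α; rw [cp, wp]
      · show w (Fin.natAdd n ⟨(q:ℕ) - n, by omega⟩) = X α + C s₁; rw [cq, wq]
      · show w (Fin.natAdd n ⟨(r:ℕ) - n, by omega⟩) = X α + C (hbar g); rw [cr, wr]
    rw [h0, mul_zero, zero_mul]


lemma aeval_dP_ne_zero (g N : ℕ) (φ : Fin N → MvPolynomial (Fin N) (F g))
    (hφ : ∀ x y : Fin N, x ≠ y → φ x ≠ φ y) : aeval φ (dP g N) ≠ 0 := by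
  unfold dP
  rw [map_prod, Finset.prod_ne_zero_iff]
  intro x _
  rw [map_prod, Finset.prod_ne_zero_iff]
  intro y _
  unfold dfac
  by_cases h : x = y
  · rw [if_pos h, map_one]; exact one_ne_zero
  · rw [if_neg h, map_sub, aeval_X, aeval_X]; exact sub_ne_zero_of_ne (hφ x y h)

lemma final_vanish (g n n' : ℕ)
    (R : MvPolynomial (Fin n) (F g)) (R' : MvPolynomial (Fin n') (F g))
    (Q : MvPolynomial (Fin (n+n')) (F g)) (hQ : ι g (n+n') Q = shuffle g n n' R R')
    (s₁ : F g) (hs0 : s₁ ≠ 0) (hsh : s₁ ≠ hbar g)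
    (HW : ∀ p q r : Fin n, p ≠ q → q ≠ r → p ≠ r →
      aeval (fun v : Fin n => if v = q then X p + C s₁ else if v = r then X p + C (hbar g)
        else (X v : MvPolynomial (Fin n) (F g))) R = 0)
    (HW' : ∀ p q r : Fin n', p ≠ q → q ≠ r → p ≠ r →
      aeval (fun v : Fin n' => if v = q then X p + C s₁ else if v = r then X p + C (hbar g)
        else (X v : MvPolynomial (Fin n') (F g))) R' = 0)
    (Z1 : zetaNumF g (-s₁) = 0) (Z2 : zetaNumF g (s₁ - hbar g) = 0)
    (α β γ : Fin (n+n')) (hαβ : α ≠ β) (hβγ : β ≠ γ) (hαγ : α ≠ γ) :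
    aeval (wheelSub g (n+n') s₁ α β γ) Q = 0 := by
  set φ := wheelSub g (n+n') s₁ α β γ with hφ
  have main := main_eq g n n' R R' Q hQ
  have hm := congrArg (aeval φ) main
  rw [map_mul, map_mul, aeval_C, map_sum] at hm
  rw [Finset.sum_eq_zero (fun σ _ => key_vanish g n n' s₁ R R' HW HW' Z1 Z2
    (zetaNumF_hbar g) α β γ hαβ hβγ hαγ σ)] at hm
  have hC : (algebraMap (F g) (MvPolynomial (Fin (n+n')) (F g)))
      ((n.factorial * n'.factorial : ℕ) : F g) ≠ 0 := by
    rw [algebraMap_eq]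
    simp only [Ne, MvPolynomial.C_eq_zero]
    exact Nat.cast_ne_zero.mpr (Nat.mul_ne_zero (Nat.factorial_ne_zero _) (Nat.factorial_ne_zero _))
  have hD : aeval φ (dP g (n+n')) ≠ 0 :=
    aeval_dP_ne_zero g (n+n') φ (wheelSub_inj g (n+n') s₁ hs0 hsh α β γ hβγ)
  rcases mul_eq_zero.mp hm with h | h
  · rcases mul_eq_zero.mp h with h' | h'
    · exact absurd h' hC
    · exact absurd h' hD
  · exact h


theorem wheel_closed_under_shuffle (g n n' : ℕ) (hg : 1 ≤ g)
    (R : MvPolynomial (Fin n) (F g)) (R' : MvPolynomial (Fin n') (F g))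
    (hR : SymPoly g n R) (hR' : SymPoly g n' R')
    (hRw : Wheel g n R) (hR'w : Wheel g n' R')
    (Q : MvPolynomial (Fin (n+n')) (F g)) (hQ : ι g (n+n') Q = shuffle g n n' R R') :
    Wheel g (n+n') Q := by
  intro e a b c hab hbc hac
  constructor
  · -- first wheel condition : s₁ = u_e
    have h := final_vanish g n n' R R' Q hQ (uu g e) (uu_ne_zero g e) (uu_ne_hbar g e)
      (fun p q r h1 h2 h3 => (hRw e p q r h1 h2 h3).1)
      (fun p q r h1 h2 h3 => (hR'w e p q r h1 h2 h3).1)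
      (zetaNumF_neg_uu g e) (zetaNumF_uu_sub_hbar g e) a b c hab hbc hac
    exact h
  · -- second wheel condition : s₁ = ħ - u_e
    have hs0 : hbar g - uu g e ≠ 0 := sub_ne_zero_of_ne (Ne.symm (uu_ne_hbar g e))
    have hsh : hbar g - uu g e ≠ hbar g := by
      intro h
      rw [sub_eq_self] at h
      exact uu_ne_zero g e h
    have hZ1 : zetaNumF g (-(hbar g - uu g e)) = 0 := by
      rw [neg_sub]
      exact zetaNumF_uu_sub_hbar g e
    have hZ2 : zetaNumF g ((hbar g - uu g e) - hbar g) = 0 := by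
      have : (hbar g - uu g e) - hbar g = -(uu g e) := by ring
      rw [this]
      exact zetaNumF_neg_uu g e
    have conv1 : ∀ (m : ℕ) (p q r : Fin m), (fun v : Fin m =>
        if v = q then X p + C (hbar g - uu g e) else if v = r then X p + C (hbar g)
        else (X v : MvPolynomial (Fin m) (F g)))
      = (fun v : Fin m => if v = q then X p + C (hbar g) - C (uu g e)
        else if v = r then X p + C (hbar g) else X v) := by
      intro m p q r
      funext v
      split_ifs <;> first | (rw [C_sub]; ring) | rfl
    have h := final_vanish g n n' R R' Q hQ (hbar g - uu g e) hs0 hsh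
      (fun p q r h1 h2 h3 => by rw [conv1 n p q r]; exact (hRw e p q r h1 h2 h3).2)
      (fun p q r h1 h2 h3 => by rw [conv1 n' p q r]; exact (hR'w e p q r h1 h2 h3).2)
      hZ1 hZ2 a b c hab hbc hac
    have hfun : wheelSub g (n+n') (hbar g - uu g e) a b c
        = (fun v : Fin (n+n') => if v = b then X a + C (hbar g) - C (uu g e)
          else if v = c then X a + C (hbar g) else X v) := by
      unfold wheelSub
      exact conv1 (n+n') a b c
    rw [← hfun]
    exact h
end
end

section
/- For every n ≥ 1 and d ≥ 0, the polynomial κ_{n,d} = (z_1^d + … + z_n^d) · ∏_{e=1}^{g} ∏_{1 ≤ a, b ≤ n} (z_a - z_b + ħ - u_e) satisfies the wheel conditions. -/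
open MvPolynomial
set_option synthInstance.maxHeartbeats 1000000
set_option maxHeartbeats 1000000

noncomputable section

/-- `κ_{n,d} = (z_1^d + … + z_n^d) · ∏_{e=1}^{g} ∏_{1 ≤ a,b ≤ n} (z_a - z_b + ħ - u_e)`. -/
def kappa (g n : ℕ) (d : ℕ) : MvPolynomial (Fin n) (F g) :=
  (∑ a : Fin n, X a ^ d) *
    ∏ e : Fin g, ∏ a : Fin n, ∏ b : Fin n, (X a - X b + C (hbar g) - C (uu g e))

/- STATEMENT 5: For every `n ≥ 1` and `d ≥ 0`, the polynomial `κ_{n,d}` satisfies the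
wheel conditions (over `F = ℚ(ħ, u_1,…,u_g)`, with `g ≥ 1`). -/

theorem kappa_satisfies_wheel (g n : ℕ) (hg : 1 ≤ g) (hn : 1 ≤ n) (d : ℕ) :
    Wheel g n (kappa g n d) := by
  intro e a b c hab hbc hac
  constructor
  · rw [kappa, map_mul]
    have h0 : aeval (fun v : Fin n =>
        if v = b then X a + C (uu g e)
        else if v = c then X a + C (hbar g)
        else (X v : MvPolynomial (Fin n) (F g)))
        (∏ e' : Fin g, ∏ a' : Fin n, ∏ b' : Fin n,
          (X a' - X b' + C (hbar g) - C (uu g e'))) = 0 := by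
      rw [map_prod]
      refine Finset.prod_eq_zero (Finset.mem_univ e) ?_
      rw [map_prod]
      refine Finset.prod_eq_zero (Finset.mem_univ b) ?_
      rw [map_prod]
      refine Finset.prod_eq_zero (Finset.mem_univ c) ?_
      simp only [map_add, map_sub, aeval_X, aeval_C, eq_self_iff_true, if_true, MvPolynomial.algebraMap_eq,
        if_neg hbc.symm]
      ring
    rw [h0, mul_zero]
  · rw [kappa, map_mul]
    have h0 : aeval (fun v : Fin n =>
        if v = b then X a + C (hbar g) - C (uu g e)
        else if v = c then X a + C (hbar g)
        else (X v : MvPolynomial (Fin n) (F g)))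
        (∏ e' : Fin g, ∏ a' : Fin n, ∏ b' : Fin n,
          (X a' - X b' + C (hbar g) - C (uu g e'))) = 0 := by
      rw [map_prod]
      refine Finset.prod_eq_zero (Finset.mem_univ e) ?_
      rw [map_prod]
      refine Finset.prod_eq_zero (Finset.mem_univ a) ?_
      rw [map_prod]
      refine Finset.prod_eq_zero (Finset.mem_univ b) ?_
      simp only [map_add, map_sub, aeval_X, aeval_C, eq_self_iff_true, if_true, MvPolynomial.algebraMap_eq, if_neg hab,
        if_neg hac]
      ring
    rw [h0, mul_zero]
end
end

section
/- For g = 0 and ζ(x) = (x−ħ)/x, the symmetrization Sym[ ∏_{1 ≤ a < b ≤ n} (z_a − z_b − ħ)/(z_a − z_b) ] equals n! (i.e. each of the apparent poles cancels and the result is the constant n!). -/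
open MvPolynomial
set_option synthInstance.maxHeartbeats 1000000
set_option maxHeartbeats 1000000

noncomputable section

/- STATEMENT 11: For `g = 0` and `ζ(x) = (x−ħ)/x`, the symmetrization
`Sym[ ∏_{1 ≤ a < b ≤ n} (z_a − z_b − ħ)/(z_a − z_b) ]`, i.e. the sum over all
`σ ∈ S_n` of `∏_{a<b} ζ(z_{σ(a)} − z_{σ(b)})`, equals the constant `n!`:
each of the apparent poles cancels. -/


open MvPolynomial Finset

private lemma sign_prod_sub {R : Type*} [CommRing R] {n : ℕ} (v : Fin n → R)
    (τ : Equiv.Perm (Fin n)) :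
    ∏ a : Fin n, ∏ b ∈ Finset.Ioi a, (v (τ a) - v (τ b)) =
      ((Equiv.Perm.sign τ : ℤ) : R) * ∏ a : Fin n, ∏ b ∈ Finset.Ioi a, (v a - v b) := by
  have key : ∀ u : Fin n → R, ∏ a : Fin n, ∏ b ∈ Finset.Ioi a, (u a - u b) =
      (-1 : R) ^ (∑ a : Fin n, (Finset.Ioi a).card) * (Matrix.vandermonde u).det := by
    intro u
    rw [Matrix.det_vandermonde]
    calc ∏ a : Fin n, ∏ b ∈ Finset.Ioi a, (u a - u b)
        = ∏ a : Fin n, ∏ b ∈ Finset.Ioi a, ((-1) * (u b - u a)) :=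
          Finset.prod_congr rfl fun a _ => Finset.prod_congr rfl fun b _ => by ring
      _ = ∏ a : Fin n, ((-1 : R) ^ (Finset.Ioi a).card * ∏ b ∈ Finset.Ioi a, (u b - u a)) := by
          exact Finset.prod_congr rfl fun a _ => by rw [Finset.prod_mul_distrib, Finset.prod_const]
      _ = (-1 : R) ^ (∑ a : Fin n, (Finset.Ioi a).card) *
            ∏ a : Fin n, ∏ b ∈ Finset.Ioi a, (u b - u a) := by
          rw [Finset.prod_mul_distrib, Finset.prod_pow_eq_pow_sum]
  have hsub : Matrix.vandermonde (v ∘ τ) = (Matrix.vandermonde v).submatrix τ id := by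
    ext i j; simp [Matrix.vandermonde_apply]
  have := key (v ∘ τ)
  simp only [Function.comp] at this
  rw [this, hsub, Matrix.det_permute, key v]
  ring

open MvPolynomial Finset

private lemma prod_sub_C_deg {R τ ι : Type*} [CommRing R] (s : Finset ι)
    (f : ι → MvPolynomial τ R) (c : ι → R) (hf : ∀ i ∈ s, (f i).IsHomogeneous 1) :
    (∏ i ∈ s, (f i - C (c i)) - ∏ i ∈ s, f i) = 0 ∨
    (∏ i ∈ s, (f i - C (c i)) - ∏ i ∈ s, f i).totalDegree < s.card := by
  classical
  induction s using Finset.induction_on with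
  | empty => left; simp
  | @insert a s ha ih =>
    have hfa : (f a).totalDegree ≤ 1 := (hf a (mem_insert_self a s)).totalDegree_le
    have hf' : ∀ i ∈ s, (f i).IsHomogeneous 1 := fun i hi => hf i (mem_insert_of_mem hi)
    have hdegs : ∀ i ∈ s, (f i - C (c i)).totalDegree ≤ 1 := fun i hi =>
      le_trans (totalDegree_sub _ _) (by
        simp only [totalDegree_C]
        exact max_le ((hf' i hi).totalDegree_le) (Nat.zero_le 1))
    have hPs' : (∏ i ∈ s, (f i - C (c i))).totalDegree ≤ s.card := by
      refine le_trans (totalDegree_finset_prod s _)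
        (le_trans (Finset.sum_le_sum hdegs) (by simp))
    have key : ∏ i ∈ insert a s, (f i - C (c i)) - ∏ i ∈ insert a s, f i =
        f a * (∏ i ∈ s, (f i - C (c i)) - ∏ i ∈ s, f i)
          - C (c a) * ∏ i ∈ s, (f i - C (c i)) := by
      rw [Finset.prod_insert ha, Finset.prod_insert ha]; ring
    right
    rw [key, Finset.card_insert_of_notMem ha]
    refine lt_of_le_of_lt (totalDegree_sub _ _) ?_
    have h2 : (C (c a) * ∏ i ∈ s, (f i - C (c i))).totalDegree < s.card + 1 := by
      refine lt_of_le_of_lt (totalDegree_mul _ _) ?_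
      simpa using Nat.lt_succ_of_le hPs'
    rcases ih hf' with h0 | hlt
    · rw [h0, mul_zero]
      simpa using h2
    · have h1 : (f a * (∏ i ∈ s, (f i - C (c i)) - ∏ i ∈ s, f i)).totalDegree < s.card + 1 :=
        lt_of_le_of_lt (totalDegree_mul _ _) (by omega)
      simp [max_lt_iff, Nat.lt_succ_iff.mp h1, Nat.lt_succ_iff.mp h2]

open MvPolynomial Finset

private lemma sum_card_Ioi (n : ℕ) :
    ∑ a : Fin n, (Finset.Ioi a).card = ∑ i ∈ Finset.range n, i := by
  calc ∑ a : Fin n, (Finset.Ioi a).card = ∑ a : Fin n, (n - 1 - (a : ℕ)) :=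
        Finset.sum_congr rfl fun a _ => Fin.card_Ioi a
    _ = ∑ j ∈ Finset.range n, (n - 1 - j) := Fin.sum_univ_eq_sum_range (fun j => n - 1 - j) n
    _ = ∑ j ∈ Finset.range n, j := Finset.sum_range_reflect (fun i => i) n

private lemma sum_distinct_ge (n : ℕ) : ∀ s : Finset ℕ, s.card = n →
    ∑ i ∈ Finset.range n, i ≤ ∑ x ∈ s, x := by
  induction n with
  | zero => simp
  | succ n ih =>
    intro s hs
    have hne : s.Nonempty := Finset.card_pos.mp (hs ▸ n.succ_pos)
    have hM : n ≤ s.max' hne := by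
      by_contra hlt
      push_neg at hlt
      have : s ⊆ Finset.range (s.max' hne + 1) := fun x hx =>
        Finset.mem_range.mpr (Nat.lt_succ_of_le (Finset.le_max' s x hx))
      have := Finset.card_le_card this
      rw [hs, Finset.card_range] at this
      omega
    have hcard : (s.erase (s.max' hne)).card = n := by
      rw [Finset.card_erase_of_mem (s.max'_mem hne), hs]
      omega
    calc ∑ i ∈ Finset.range (n+1), i = (∑ i ∈ Finset.range n, i) + n := by
          rw [Finset.sum_range_succ]
      _ ≤ (∑ x ∈ s.erase (s.max' hne), x) + s.max' hne :=
          Nat.add_le_add (ih _ hcard) hM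
      _ = ∑ x ∈ s, x := by
          rw [← Finset.add_sum_erase s (fun x => x) (s.max'_mem hne)]; ring

private lemma sum_injective_ge {n : ℕ} (f : Fin n → ℕ) (hf : Function.Injective f) :
    ∑ i ∈ Finset.range n, i ≤ ∑ a : Fin n, f a := by
  have h1 : (Finset.univ.image f).card = n := by
    rw [Finset.card_image_of_injective _ hf, Finset.card_univ, Fintype.card_fin]
  have h2 := sum_distinct_ge n (Finset.univ.image f) h1
  rwa [Finset.sum_image (fun a _ b _ h => hf h)] at h2

private lemma main_poly {K : Type*} [Field K] [CharZero K] (n : ℕ) (h : K) :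
    ∑ σ : Equiv.Perm (Fin n), ((Equiv.Perm.sign σ : ℤ) : MvPolynomial (Fin n) K) *
        ∏ a : Fin n, ∏ b ∈ Finset.Ioi a, (X (σ a) - X (σ b) - C h) =
      (n.factorial : MvPolynomial (Fin n) K) *
        ∏ a : Fin n, ∏ b ∈ Finset.Ioi a, (X a - X b) := by
  classical
  set Δ : MvPolynomial (Fin n) K := ∏ a : Fin n, ∏ b ∈ Finset.Ioi a, (X a - X b) with hΔ
  set Pp : Equiv.Perm (Fin n) → MvPolynomial (Fin n) K :=
    fun σ => ∏ a : Fin n, ∏ b ∈ Finset.Ioi a, (X (σ a) - X (σ b) - C h) with hPp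
  set Q : Equiv.Perm (Fin n) → MvPolynomial (Fin n) K :=
    fun σ => ∏ a : Fin n, ∏ b ∈ Finset.Ioi a, (X (σ a) - X (σ b)) with hQdef
  set ε : Equiv.Perm (Fin n) → K := fun σ => ((Equiv.Perm.sign σ : ℤ) : K) with hε
  have hcast : ∀ σ : Equiv.Perm (Fin n),
      ((Equiv.Perm.sign σ : ℤ) : MvPolynomial (Fin n) K) = C (ε σ) :=
    fun σ => (map_intCast (C : K →+* MvPolynomial (Fin n) K) _).symm
  have hεmul : ∀ σ τ : Equiv.Perm (Fin n), ε (σ * τ) = ε σ * ε τ := by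
    intro σ τ
    simp only [hε, map_mul, Units.val_mul, Int.cast_mul]
  have hεε : ∀ σ : Equiv.Perm (Fin n), ε σ * ε σ = 1 := by
    intro σ
    rw [← hεmul]
    simp [hε]
  have hQ : ∀ σ : Equiv.Perm (Fin n), Q σ = C (ε σ) * Δ := by
    intro σ
    rw [hQdef, hΔ, ← hcast]
    exact sign_prod_sub X σ
  -- the number-of-pairs degree bound
  set D : ℕ := ∑ a : Fin n, (Finset.Ioi a).card with hD
  set P : MvPolynomial (Fin n) K := ∑ σ : Equiv.Perm (Fin n), C (ε σ) * (Pp σ - Q σ) with hP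
  have hfac : (n.factorial : MvPolynomial (Fin n) K) * Δ =
      ∑ σ : Equiv.Perm (Fin n), C (ε σ) * Q σ := by
    have : ∀ σ : Equiv.Perm (Fin n), C (ε σ) * Q σ = Δ := by
      intro σ
      rw [hQ σ, ← mul_assoc, ← map_mul, hεε, map_one, one_mul]
    rw [Finset.sum_congr rfl fun σ _ => this σ, Finset.sum_const, Finset.card_univ,
      Fintype.card_perm, Fintype.card_fin, nsmul_eq_mul]
  have hsplit : ∑ σ : Equiv.Perm (Fin n),
      ((Equiv.Perm.sign σ : ℤ) : MvPolynomial (Fin n) K) * Pp σ -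
      (n.factorial : MvPolynomial (Fin n) K) * Δ = P := by
    rw [hfac, ← Finset.sum_sub_distrib]
    exact Finset.sum_congr rfl fun σ _ => by rw [hcast σ, mul_sub]
  
  have hdeg : ∀ σ : Equiv.Perm (Fin n), Pp σ - Q σ = 0 ∨ (Pp σ - Q σ).totalDegree < D := by
    intro σ
    have hs := prod_sub_C_deg (Finset.univ.sigma fun a : Fin n => Finset.Ioi a)
      (fun p => X (σ p.1) - X (σ p.2)) (fun _ => h)
      (fun p _ => (isHomogeneous_X K (σ p.1)).sub (isHomogeneous_X K (σ p.2)))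
    rw [Finset.card_sigma] at hs
    have e1 : ∏ p ∈ (Finset.univ.sigma fun a : Fin n => Finset.Ioi a),
        ((X (σ p.1) - X (σ p.2)) - C h) = Pp σ := Finset.prod_sigma _ _ _
    have e2 : ∏ p ∈ (Finset.univ.sigma fun a : Fin n => Finset.Ioi a),
        (X (σ p.1) - X (σ p.2)) = Q σ := Finset.prod_sigma _ _ _
    rw [e1, e2] at hs
    exact hs
  have halt : ∀ τ : Equiv.Perm (Fin n), rename (⇑τ) P = C (ε τ) * P := by
    intro τ
    have hren : ∀ σ : Equiv.Perm (Fin n),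
        rename (⇑τ) (C (ε σ) * (Pp σ - Q σ)) = C (ε σ) * (Pp (τ * σ) - Q (τ * σ)) := by
      intro σ
      rw [map_mul, map_sub, rename_C]
      congr 1
      congr 1
      · rw [hPp]
        simp only [map_prod, map_sub, rename_X, rename_C, Equiv.Perm.mul_apply]
      · rw [hQdef]
        simp only [map_prod, map_sub, rename_X, Equiv.Perm.mul_apply]
    calc rename (⇑τ) P = ∑ σ : Equiv.Perm (Fin n), C (ε σ) * (Pp (τ * σ) - Q (τ * σ)) := by
          rw [hP, map_sum]
          exact Finset.sum_congr rfl fun σ _ => hren σ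
      _ = ∑ ρ : Equiv.Perm (Fin n), C (ε τ) * (C (ε ρ) * (Pp ρ - Q ρ)) := by
          refine Fintype.sum_equiv (Equiv.mulLeft τ) _ _ fun σ => ?_
          simp only [Equiv.coe_mulLeft]
          rw [← mul_assoc, ← map_mul, hεmul τ σ, ← mul_assoc, hεε τ, one_mul]
      _ = C (ε τ) * P := by rw [hP, Finset.mul_sum]
  have hPzero : P = 0 := by
    by_contra hne
    obtain ⟨m, hm⟩ := support_nonempty.mpr hne
    by_cases hinj : Function.Injective ⇑m
    · have hco : ∀ σ : Equiv.Perm (Fin n), coeff m (Pp σ - Q σ) = 0 := by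
        intro σ
        rcases hdeg σ with h0 | hlt
        · rw [h0, coeff_zero]
        · by_contra hc
          have hmem : m ∈ (Pp σ - Q σ).support := mem_support_iff.mpr hc
          have h1 := le_totalDegree hmem
          have hms : (m.sum fun _ e => e) = ∑ a : Fin n, m a := by
            rw [Finsupp.sum_fintype]
            intro
            rfl
          have h2 := sum_injective_ge (⇑m) hinj
          rw [← sum_card_Ioi n, ← hD] at h2
          omega
      have hc0 : coeff m P = 0 := by
        rw [hP, coeff_sum]
        refine Finset.sum_eq_zero fun σ _ => ?_
        rw [coeff_C_mul, hco σ, mul_zero]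
      exact mem_support_iff.mp hm hc0
    · obtain ⟨a, b, hmeq, hab⟩ := Function.not_injective_iff.mp hinj
      set τ := Equiv.swap a b with hτ
      have hmap : Finsupp.mapDomain (⇑τ) m = m := by
        ext x
        rw [Finsupp.mapDomain_equiv_apply, hτ, Equiv.symm_swap]
        rcases eq_or_ne x a with rfl | hxa
        · rw [Equiv.swap_apply_left]
          exact hmeq.symm
        rcases eq_or_ne x b with rfl | hxb
        · rw [Equiv.swap_apply_right]
          exact hmeq
        · rw [Equiv.swap_apply_of_ne_of_ne hxa hxb]
      have hsign : ε τ = -1 := by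
        simp [hε, hτ, Equiv.Perm.sign_swap hab]
      have h1 : coeff m P = - coeff m P :=
        calc coeff m P = coeff (Finsupp.mapDomain (⇑τ) m) (rename (⇑τ) P) :=
              (coeff_rename_mapDomain _ τ.injective P m).symm
          _ = coeff m (C (ε τ) * P) := by rw [hmap, halt τ]
          _ = - coeff m P := by rw [coeff_C_mul, hsign]; ring
      have h2 : (2 : K) * coeff m P = 0 := by
        rw [two_mul]
        nth_rewrite 1 [h1]
        ring
      have h3 : coeff m P = 0 := by
        rcases mul_eq_zero.mp h2 with h | h
        · exact absurd h two_ne_zero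
        · exact h
      exact mem_support_iff.mp hm h3
  rw [← sub_eq_zero, hsplit, hPzero]

private lemma hperm_iota (g n : ℕ) (σ : Equiv.Perm (Fin n)) (p : MvPolynomial (Fin n) (F g)) :
    permK g n σ (ι g n p) = ι g n (rename (⇑σ) p) :=
  IsFractionRing.ringEquivOfRingEquiv_algebraMap _ p

theorem sym_prod_zeta_eq_factorial (n : ℕ) :
    (∑ σ : Equiv.Perm (Fin n), permK 0 n σ
        (∏ a : Fin n, ∏ b ∈ Finset.Ioi a, zeta 0 n (zz 0 n a - zz 0 n b))) =
      (n.factorial : Kn 0 n) := by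
  classical
  set Δ : MvPolynomial (Fin n) (F 0) := ∏ a : Fin n, ∏ b ∈ Finset.Ioi a, (X a - X b) with hΔ
  set Pp : Equiv.Perm (Fin n) → MvPolynomial (Fin n) (F 0) :=
    fun σ => ∏ a : Fin n, ∏ b ∈ Finset.Ioi a, (X (σ a) - X (σ b) - C (hbar 0)) with hPp
  set Q : Equiv.Perm (Fin n) → MvPolynomial (Fin n) (F 0) :=
    fun σ => ∏ a : Fin n, ∏ b ∈ Finset.Ioi a, (X (σ a) - X (σ b)) with hQdef
  set ε : Equiv.Perm (Fin n) → F 0 := fun σ => ((Equiv.Perm.sign σ : ℤ) : F 0) with hε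
  have hcast : ∀ σ : Equiv.Perm (Fin n),
      ((Equiv.Perm.sign σ : ℤ) : MvPolynomial (Fin n) (F 0)) = C (ε σ) :=
    fun σ => (map_intCast (C : F 0 →+* MvPolynomial (Fin n) (F 0)) _).symm
  have hεε : ∀ σ : Equiv.Perm (Fin n), ε σ * ε σ = 1 := by
    intro σ
    rw [hε, ← Int.cast_mul, ← Units.val_mul, Int.units_mul_self, Units.val_one, Int.cast_one]
  have hQ : ∀ σ : Equiv.Perm (Fin n), Q σ = C (ε σ) * Δ := by
    intro σ
    rw [hQdef, hΔ, ← hcast]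
    exact sign_prod_sub X σ
  -- ι Δ is nonzero
  have hΔ0 : Δ ≠ 0 := by
    rw [hΔ]
    refine Finset.prod_ne_zero_iff.mpr fun a _ => Finset.prod_ne_zero_iff.mpr fun b hb => ?_
    exact sub_ne_zero_of_ne fun hXX =>
      (Finset.mem_Ioi.mp hb).ne' (X_injective hXX).symm
  have hιΔ0 : ι 0 n Δ ≠ 0 := fun hzero =>
    hΔ0 ((IsFractionRing.to_map_eq_zero_iff (K := Kn 0 n)).mp hzero)
  -- compute each zeta factor
  have hzeta : ∀ a b : Fin n, zeta 0 n (zz 0 n a - zz 0 n b) =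
      ι 0 n (X a - X b - C (hbar 0)) / ι 0 n (X a - X b) := by
    intro a b
    unfold zeta zz cc
    rw [Finset.univ_eq_empty, Finset.prod_empty, mul_one, ← map_sub, ← map_sub]
  -- each symmetrized summand
  have hterm : ∀ σ : Equiv.Perm (Fin n),
      permK 0 n σ (∏ a : Fin n, ∏ b ∈ Finset.Ioi a, zeta 0 n (zz 0 n a - zz 0 n b)) =
        ι 0 n (Pp σ) / ι 0 n (Q σ) := by
    intro σ
    calc permK 0 n σ (∏ a : Fin n, ∏ b ∈ Finset.Ioi a, zeta 0 n (zz 0 n a - zz 0 n b))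
        = ∏ a : Fin n, ∏ b ∈ Finset.Ioi a,
            (ι 0 n (X (σ a) - X (σ b) - C (hbar 0)) / ι 0 n (X (σ a) - X (σ b))) := by
          rw [map_prod]
          refine Finset.prod_congr rfl fun a _ => ?_
          rw [map_prod]
          refine Finset.prod_congr rfl fun b _ => ?_
          rw [hzeta a b, map_div₀, hperm_iota, hperm_iota]
          simp only [map_sub, rename_X, rename_C]
      _ = ι 0 n (Pp σ) / ι 0 n (Q σ) := by
          rw [hPp, hQdef, map_prod, map_prod]
          rw [← Finset.prod_div_distrib]
          refine Finset.prod_congr rfl fun a _ => ?_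
          rw [map_prod, map_prod, ← Finset.prod_div_distrib]
  -- helper for moving the sign out of the denominator
  have hdivkey : ∀ e x d : Kn 0 n, e * e = 1 → x / (e * d) = (e * x) / d := by
    intro e x d he
    have he0 : e ≠ 0 := by
      intro h0
      rw [h0, mul_zero] at he
      exact zero_ne_one he
    have hinv : e⁻¹ = e := inv_eq_of_mul_eq_one_right he
    rw [mul_comm e d, ← div_div, div_eq_mul_inv (x / d) e, hinv]
    ring
  have hει : ∀ σ : Equiv.Perm (Fin n), ι 0 n (C (ε σ)) * ι 0 n (C (ε σ)) = 1 := by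
    intro σ
    rw [← map_mul, ← map_mul, hεε, map_one, map_one]
  have hmp : ∑ σ : Equiv.Perm (Fin n), C (ε σ) * Pp σ =
      (n.factorial : MvPolynomial (Fin n) (F 0)) * Δ := by
    have := main_poly (K := F 0) n (hbar 0)
    simp only [hcast] at this
    rw [hPp, hΔ]
    exact this
  calc ∑ σ : Equiv.Perm (Fin n), permK 0 n σ
        (∏ a : Fin n, ∏ b ∈ Finset.Ioi a, zeta 0 n (zz 0 n a - zz 0 n b))
      = ∑ σ : Equiv.Perm (Fin n), ι 0 n (Pp σ) / ι 0 n (Q σ) :=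
        Finset.sum_congr rfl fun σ _ => hterm σ
    _ = ∑ σ : Equiv.Perm (Fin n), ι 0 n (C (ε σ) * Pp σ) / ι 0 n Δ := by
        refine Finset.sum_congr rfl fun σ _ => ?_
        rw [hQ σ, map_mul, hdivkey _ _ _ (hει σ), map_mul]
    _ = ι 0 n (∑ σ : Equiv.Perm (Fin n), C (ε σ) * Pp σ) / ι 0 n Δ := by
        rw [← Finset.sum_div, ← map_sum]
    _ = ι 0 n ((n.factorial : MvPolynomial (Fin n) (F 0)) * Δ) / ι 0 n Δ := by rw [hmp]
    _ = (n.factorial : Kn 0 n) := by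
        rw [map_mul, mul_div_assoc, div_self hιΔ0, mul_one, map_natCast]
end
end
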